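/- Under the hypotheses of the coherence theorem (deterministic map between linearly independent families, with complete superposition φ¹ = ∑_j q_j ψ¹_j, all q_j ≠ 0, mapped to pure φ² = ∑_j r_j ψ²_j), the ratio matrix satisfies μ_{j j'} = (r̄_{j'}/q̄_{j'})(r_j/q_j) for all j, j', where μ_{j j'} = ⟨ψ¹_{j'}, ψ¹_j⟩ / ⟨ψ²_{j'}, ψ²_j⟩. -/

import Mathlib

open scoped InnerProductSpace ComplexOrder

/-- The rank-one operator `|φ⟩⟨χ| : v ↦ ⟨χ, v⟩ φ`. -/
noncomputable def outer {H : Type*} [NormedAddCommGroup H] [InnerProductSpace ℂ H]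
    (φ χ : H) : H →ₗ[ℂ] H where
  toFun v := ⟪χ, v⟫_ℂ • φ
  map_add' x y := by simp [inner_add_right, add_smul]
  map_smul' c x := by simp [inner_smul_right, smul_smul]

/-!
The Kraus condition `∑ₖ Aₖ† Aₖ = 1` together with `Aₖ ψ¹ⱼ = c_{jk} ψ²ⱼ` gives
`⟪ψ¹_{j'}, ψ¹ⱼ⟫ = (∑ₖ c̄_{j'k} c_{jk}) ⟪ψ²_{j'}, ψ²ⱼ⟫`. Since `Aₖ φ¹ = ∑ⱼ qⱼ c_{jk} ψ²ⱼ`, purity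
says `∑ₖ |Aₖφ¹⟩⟨Aₖφ¹| = |φ²⟩⟨φ²|`; sandwiching both sides between vectors of a family
biorthogonal to the linearly independent `ψ²` compares coefficients:
`qⱼ q̄_{j'} ∑ₖ c_{jk} c̄_{j'k} = rⱼ r̄_{j'}`. Dividing the two identities gives `μ_{jj'}`.
-/

theorem LinearIndependent.exists_inner_eq_ite {𝕜 E ι : Type*} [RCLike 𝕜]
    [NormedAddCommGroup E] [InnerProductSpace 𝕜 E] [FiniteDimensional 𝕜 E] [DecidableEq ι]
    {ψ : ι → E} (hψ : LinearIndependent 𝕜 ψ) :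
    ∃ d : ι → E, ∀ i j, ⟪d i, ψ j⟫_𝕜 = if i = j then 1 else 0 := by
  have := FiniteDimensional.complete 𝕜 E
  choose f hf using fun i => LinearMap.exists_extend ((Finsupp.lapply i).comp hψ.repr)
  refine ⟨fun i => (InnerProductSpace.toDual 𝕜 E).symm (f i).toContinuousLinearMap,
    fun i j => ?_⟩
  rw [InnerProductSpace.toDual_symm_apply, LinearMap.coe_toContinuousLinearMap']
  have hfψ := LinearMap.congr_fun (hf i) ⟨ψ j, Submodule.subset_span ⟨j, rfl⟩⟩
  rw [LinearMap.comp_apply, Submodule.subtype_apply, LinearMap.comp_apply,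
    hψ.repr_eq_single j _ rfl, Finsupp.lapply_apply, Finsupp.single_apply] at hfψ
  rw [hfψ]
  exact if_congr eq_comm rfl rfl

theorem inner_sum_smul_of_inner_eq_ite {𝕜 E ι : Type*} [RCLike 𝕜]
    [NormedAddCommGroup E] [InnerProductSpace 𝕜 E] [Fintype ι] [DecidableEq ι]
    {ψ d : ι → E} (hd : ∀ i j, ⟪d i, ψ j⟫_𝕜 = if i = j then 1 else 0) (a : ι → 𝕜) (i : ι) :
    ⟪d i, ∑ j, a j • ψ j⟫_𝕜 = a i := by
  simp [inner_sum, inner_smul_right, hd]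

section Outer

variable {H : Type*} [NormedAddCommGroup H] [InnerProductSpace ℂ H]

theorem outer_apply (φ χ v : H) : outer φ χ v = ⟪χ, v⟫_ℂ • φ := rfl

theorem comp_outer_comp_adjoint [FiniteDimensional ℂ H] (A : H →ₗ[ℂ] H) (φ χ : H) :
    A ∘ₗ outer φ χ ∘ₗ LinearMap.adjoint A = outer (A φ) (A χ) := by
  ext v
  simp [outer_apply, LinearMap.adjoint_inner_right]

theorem inner_outer_apply (φ χ u v : H) : ⟪u, outer φ χ v⟫_ℂ = ⟪u, φ⟫_ℂ * ⟪χ, v⟫_ℂ := by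
  rw [outer_apply, inner_smul_right, mul_comm]

theorem sum_mul_conj_eq_of_sum_outer_eq [FiniteDimensional ℂ H] {ι κ : Type*} [Fintype ι]
    [Fintype κ] {ψ : ι → H} (hψ : LinearIndependent ℂ ψ) (a : κ → ι → ℂ) (r : ι → ℂ)
    (h : ∑ k, outer (∑ j, a k j • ψ j) (∑ j, a k j • ψ j)
      = outer (∑ j, r j • ψ j) (∑ j, r j • ψ j)) (j j' : ι) :
    ∑ k, a k j * starRingEnd ℂ (a k j') = r j * starRingEnd ℂ (r j') := by
  classical
  obtain ⟨d, hd⟩ := hψ.exists_inner_eq_ite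
  have hcoeff := inner_sum_smul_of_inner_eq_ite hd
  have hcoeff' (b : ι → ℂ) (i : ι) : ⟪∑ j, b j • ψ j, d i⟫_ℂ = starRingEnd ℂ (b i) := by
    rw [← inner_conj_symm, hcoeff]
  simpa only [LinearMap.sum_apply, inner_sum, inner_outer_apply, hcoeff, hcoeff'] using
    congrArg (fun T : H →ₗ[ℂ] H => ⟪d j, T (d j')⟫_ℂ) h

end Outer

theorem inner_eq_sum_conj_mul_inner {𝕜 E : Type*} [RCLike 𝕜]
    [NormedAddCommGroup E] [InnerProductSpace 𝕜 E] [FiniteDimensional 𝕜 E] {κ : Type*} [Fintype κ]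
    (A : κ → E →ₗ[𝕜] E) (hA : ∑ k, LinearMap.adjoint (A k) ∘ₗ A k = LinearMap.id)
    {x y u v : E} {a b : κ → 𝕜} (hx : ∀ k, A k x = a k • u) (hy : ∀ k, A k y = b k • v) :
    ⟪x, y⟫_𝕜 = (∑ k, starRingEnd 𝕜 (a k) * b k) * ⟪u, v⟫_𝕜 := by
  calc ⟪x, y⟫_𝕜 = ⟪x, (∑ k, LinearMap.adjoint (A k) ∘ₗ A k) y⟫_𝕜 := by rw [hA, LinearMap.id_apply]
    _ = ∑ k, ⟪A k x, A k y⟫_𝕜 := by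
        simp only [LinearMap.sum_apply, LinearMap.comp_apply, inner_sum,
          LinearMap.adjoint_inner_right]
    _ = _ := by
        simp only [hx, hy, inner_smul_left, inner_smul_right, Finset.sum_mul]
        exact Finset.sum_congr rfl fun k _ => by ring

theorem stmt_16_general {H : Type*} [NormedAddCommGroup H] [InnerProductSpace ℂ H]
    [FiniteDimensional ℂ H] {N m : ℕ} (ψ1 ψ2 : Fin N → H)
    (hli2 : LinearIndependent ℂ ψ2)
    (hnz : ∀ j j', ⟪ψ2 j', ψ2 j⟫_ℂ ≠ 0)
    (A : Fin m → (H →ₗ[ℂ] H))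
    (hA : ∑ k, LinearMap.adjoint (A k) ∘ₗ A k = LinearMap.id)
    (c : Fin N → Fin m → ℂ) (hc : ∀ j k, A k (ψ1 j) = c j k • ψ2 j)
    (q r : Fin N → ℂ) (hq : ∀ j, q j ≠ 0)
    (hpure : ∑ k, (A k) ∘ₗ outer (∑ j, q j • ψ1 j) (∑ j, q j • ψ1 j)
          ∘ₗ LinearMap.adjoint (A k)
        = outer (∑ j, r j • ψ2 j) (∑ j, r j • ψ2 j)) :
    ∀ j j', ⟪ψ1 j', ψ1 j⟫_ℂ / ⟪ψ2 j', ψ2 j⟫_ℂ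
      = ((starRingEnd ℂ) (r j') / (starRingEnd ℂ) (q j')) * (r j / q j) := by
  intro j j'
  have hAφ (k : Fin m) : A k (∑ j, q j • ψ1 j) = ∑ j, (q j * c j k) • ψ2 j := by
    simp only [map_sum, map_smul, hc, smul_smul]
  have hcoeff := sum_mul_conj_eq_of_sum_outer_eq hli2 (fun k j => q j * c j k) r
    (by simpa only [comp_outer_comp_adjoint, hAφ] using hpure) j j'
  have hq' : starRingEnd ℂ (q j') ≠ 0 := (map_ne_zero _).mpr (hq j')
  rw [inner_eq_sum_conj_mul_inner A hA (hc j') (hc j), mul_div_cancel_right₀ _ (hnz j j'),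
    div_mul_div_comm, eq_div_iff (mul_ne_zero hq' (hq j))]
  have hfactor : ∑ k, q j * c j k * starRingEnd ℂ (q j' * c j' k)
      = q j * starRingEnd ℂ (q j') * ∑ k, starRingEnd ℂ (c j' k) * c j k := by
    rw [Finset.mul_sum]
    exact Finset.sum_congr rfl fun k _ => by rw [map_mul]; ring
  linear_combination hcoeff - hfactor

theorem stmt_16 {H : Type*} [NormedAddCommGroup H] [InnerProductSpace ℂ H]
    [FiniteDimensional ℂ H] {N m : ℕ} (ψ1 ψ2 : Fin N → H)
    (hli1 : LinearIndependent ℂ ψ1) (hli2 : LinearIndependent ℂ ψ2)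
    (h1 : ∀ j, ‖ψ1 j‖ = 1) (h2 : ∀ j, ‖ψ2 j‖ = 1)
    (hnz : ∀ j j', ⟪ψ2 j', ψ2 j⟫_ℂ ≠ 0)
    (A : Fin m → (H →ₗ[ℂ] H))
    (hA : ∑ k, LinearMap.adjoint (A k) ∘ₗ A k = LinearMap.id)
    (c : Fin N → Fin m → ℂ) (hc : ∀ j k, A k (ψ1 j) = c j k • ψ2 j)
    (q r : Fin N → ℂ) (hq : ∀ j, q j ≠ 0)
    (hpure : ∑ k, (A k) ∘ₗ outer (∑ j, q j • ψ1 j) (∑ j, q j • ψ1 j)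
          ∘ₗ LinearMap.adjoint (A k)
        = outer (∑ j, r j • ψ2 j) (∑ j, r j • ψ2 j)) :
    ∀ j j', ⟪ψ1 j', ψ1 j⟫_ℂ / ⟪ψ2 j', ψ2 j⟫_ℂ
      = ((starRingEnd ℂ) (r j') / (starRingEnd ℂ) (q j')) * (r j / q j) :=
  stmt_16_general ψ1 ψ2 hli2 hnz A hA c hc q r hq hpure
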